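/- arXiv:2508.06766 — 2 statements merged into one kernel-verified Lean document; each statement's English description precedes it below -/
import Mathlib

section
/- Let F ∈ ℂ⟦X⟧ be the exponential generating function F = ∑_{n≥0} c_n^{(k)}(α,a) X^n/n! of the two-parameter Hurwitz-Lerch type poly-Cauchy numbers of the first kind. Then, for every k ∈ ℤ, the formal derivative of F satisfies (1 + X) · F′ = ∑_{n≥0} D_n^{(k)}(α,a) X^n/n!, where D_n^{(k)}(α,a) = ∑_{j=0}^{n} (-1)^{n-j} · [n j] · (α(j+1) + a)^{-k}. -/
open PowerSeries Finset

/-- Unsigned Stirling numbers of the first kind. -/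
def stirling1 : ℕ → ℕ → ℕ
  | 0, 0 => 1
  | 0, _ + 1 => 0
  | _ + 1, 0 => 0
  | n + 1, m + 1 => stirling1 n m + n * stirling1 n (m + 1)

/-- Stirling numbers of the second kind. -/
def stirling2 : ℕ → ℕ → ℕ
  | 0, 0 => 1
  | 0, _ + 1 => 0
  | _ + 1, 0 => 0
  | n + 1, m + 1 => stirling2 n m + (m + 1) * stirling2 n (m + 1)

/-- Two-parameter Hurwitz-Lerch type poly-Bernoulli numbers
    `B_n^{(k)}(α,a) = (-1)^n ∑_{m=0}^n (-1)^m m! {n m} (αm+a)^{-k}`. -/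
noncomputable def polyBernoulli (k : ℤ) (α a : ℂ) (n : ℕ) : ℂ :=
  (-1 : ℂ) ^ n * ∑ m ∈ Finset.range (n + 1),
    (-1 : ℂ) ^ m * (m.factorial : ℂ) * (stirling2 n m : ℂ) * (α * m + a) ^ (-k)

/-- Two-parameter Hurwitz-Lerch type poly-Cauchy numbers of the first kind
    `c_n^{(k)}(α,a) = (-1)^n ∑_{m=0}^n (-1)^m [n m] (αm+a)^{-k}`. -/
noncomputable def polyCauchy1 (k : ℤ) (α a : ℂ) (n : ℕ) : ℂ :=
  (-1 : ℂ) ^ n * ∑ m ∈ Finset.range (n + 1),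
    (-1 : ℂ) ^ m * (stirling1 n m : ℂ) * (α * m + a) ^ (-k)

/-- Two-parameter Hurwitz-Lerch type poly-Cauchy numbers of the second kind
    `ĉ_n^{(k)}(α,a) = (-1)^n ∑_{m=0}^n [n m] (αm+a)^{-k}`. -/
noncomputable def polyCauchy2 (k : ℤ) (α a : ℂ) (n : ℕ) : ℂ :=
  (-1 : ℂ) ^ n * ∑ m ∈ Finset.range (n + 1),
    (stirling1 n m : ℂ) * (α * m + a) ^ (-k)

/-- The formal power series `log(1+X) = ∑_{j≥1} (-1)^{j-1} X^j / j` in `ℂ⟦X⟧`. -/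
noncomputable def formalLog : PowerSeries ℂ :=
  PowerSeries.mk fun j => if j = 0 then 0 else (-1 : ℂ) ^ (j - 1) / j

/-!
The exponential generating function `F` of a sequence `c` satisfies
`(1 + X) F' = ∑ (c (n+1) + n c n) X^n / n!`, so the theorem is the recurrence
`c_{n+1} + n c_n = D_n`. Viewing `c_n = (-1)^n ∑ (-1)^m [n m] f m` as a transform of
`f m = (αm+a)^{-k}`, the recurrence holds for every `f`: the Stirling recurrence
`[n+1, m+1] = [n m] + n [n, m+1]` splits `c_{n+1}` into the transform of `m ↦ f (m+1)`,
which is `D_n`, and a term that is `-n c_n` after an index shift.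
-/

theorem stirling1_eq_zero_of_lt {n m : ℕ} (h : n < m) : stirling1 n m = 0 := by
  induction n generalizing m with
  | zero => obtain ⟨m, rfl⟩ := Nat.exists_eq_succ_of_ne_zero h.ne'; rfl
  | succ n ih =>
    obtain ⟨m, rfl⟩ := Nat.exists_eq_succ_of_ne_zero (by omega : m ≠ 0)
    simp only [stirling1, ih (by omega : n < m), ih (by omega : n < m + 1), mul_zero, add_zero]

theorem mul_stirling1_zero (n : ℕ) : n * stirling1 n 0 = 0 := by
  cases n <;> rfl

section StirlingTransform

variable {R : Type*} [CommRing R]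

def stirling1Transform (f : ℕ → R) (n : ℕ) : R :=
  (-1) ^ n * ∑ m ∈ range (n + 1), (-1) ^ m * (stirling1 n m : R) * f m

theorem stirling1Transform_succ_add_mul (f : ℕ → R) (n : ℕ) :
    stirling1Transform f (n + 1) + n * stirling1Transform f n =
      stirling1Transform (fun m => f (m + 1)) n := by
  set g : ℕ → R := fun m => (-1) ^ m * (stirling1 n m : R) * f m
  have hsplit : ∑ m ∈ range (n + 2), (-1) ^ m * (stirling1 (n + 1) m : R) * f m =
      -∑ m ∈ range (n + 1), (-1) ^ m * (stirling1 n m : R) * f (m + 1) +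
        n * ∑ m ∈ range (n + 1), g (m + 1) := by
    rw [sum_range_succ', mul_sum, ← sum_neg_distrib, ← sum_add_distrib]
    simp only [stirling1, g, Nat.cast_add, Nat.cast_mul, Nat.cast_zero, mul_zero, zero_mul,
      add_zero]
    refine sum_congr rfl fun m _ => ?_
    ring
  have hshift : ∑ m ∈ range (n + 1), g (m + 1) = ∑ m ∈ range (n + 1), g m - g 0 := by
    rw [eq_sub_iff_add_eq, ← sum_range_succ', sum_range_succ]
    simp [g, stirling1_eq_zero_of_lt n.lt_succ_self]
  have hg0 : (n : R) * g 0 = 0 := by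
    simp only [g, pow_zero, one_mul, ← mul_assoc, ← Nat.cast_mul, mul_stirling1_zero,
      Nat.cast_zero, zero_mul]
  unfold stirling1Transform
  rw [hsplit, hshift, pow_succ]
  linear_combination (-1 : R) ^ n * hg0

theorem stirling1Transform_eq_sum_neg_one_pow_sub (f : ℕ → R) (n : ℕ) :
    stirling1Transform f n = ∑ j ∈ range (n + 1), (-1) ^ (n - j) * (stirling1 n j : R) * f j := by
  rw [stirling1Transform, mul_sum]
  refine sum_congr rfl fun j hj => ?_
  obtain ⟨i, rfl⟩ := Nat.exists_eq_add_of_le (mem_range_succ_iff.mp hj)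
  have hsq : ((-1 : R) ^ j) * (-1) ^ j = 1 := by rw [← pow_add, ← two_mul, pow_mul]; simp
  rw [Nat.add_sub_cancel_left, pow_add]
  linear_combination ((-1) ^ i * (stirling1 (j + i) j : R) * f j) * hsq

end StirlingTransform

section ExponentialGeneratingFunction

variable {K : Type*} [Field K] [CharZero K]

theorem derivative_mk_div_factorial (c : ℕ → K) :
    derivative K (PowerSeries.mk fun n => c n / n.factorial) =
      PowerSeries.mk fun n => c (n + 1) / n.factorial := by
  ext n
  rw [coeff_derivative, coeff_mk, coeff_mk, Nat.factorial_succ, Nat.cast_mul]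
  field_simp
  push_cast
  ring

theorem X_mul_mk_succ_div_factorial (c : ℕ → K) :
    X * (PowerSeries.mk fun n => c (n + 1) / n.factorial) =
      PowerSeries.mk fun n => n * c n / n.factorial := by
  ext (_ | n)
  · simp
  · rw [coeff_succ_X_mul, coeff_mk, coeff_mk, Nat.factorial_succ, Nat.cast_mul]
    field_simp

theorem one_add_X_mul_derivative_mk_div_factorial (c : ℕ → K) :
    (1 + X) * derivative K (PowerSeries.mk fun n => c n / n.factorial) =
      PowerSeries.mk fun n => (c (n + 1) + n * c n) / n.factorial := by
  rw [derivative_mk_div_factorial, add_mul, one_mul, X_mul_mk_succ_div_factorial]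
  ext n
  simp [add_div]

end ExponentialGeneratingFunction

theorem stmt10_general (α a : ℂ) (k : ℤ) :
    (1 + PowerSeries.X) *
        (PowerSeries.mk fun n => polyCauchy1 k α a n / (n.factorial : ℂ)).derivativeFun =
      PowerSeries.mk fun n =>
        (∑ j ∈ Finset.range (n + 1),
          (-1 : ℂ) ^ (n - j) * (stirling1 n j : ℂ) * (α * (j + 1) + a) ^ (-k)) /
          (n.factorial : ℂ) := by
  have hc : polyCauchy1 k α a = stirling1Transform fun m => (α * m + a) ^ (-k) := rfl
  have hD (n : ℕ) : polyCauchy1 k α a (n + 1) + n * polyCauchy1 k α a n =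
      ∑ j ∈ range (n + 1), (-1) ^ (n - j) * (stirling1 n j : ℂ) * (α * (j + 1) + a) ^ (-k) := by
    rw [hc, stirling1Transform_succ_add_mul, stirling1Transform_eq_sum_neg_one_pow_sub]
    push_cast
    rfl
  change (1 + X) * derivative ℂ _ = _
  simp only [one_add_X_mul_derivative_mk_div_factorial, hD]

theorem stmt10 (α a : ℂ) (hα : α ≠ 0) (ha : ∀ m : ℕ, α * m + a ≠ 0) (k : ℤ) :
    (1 + PowerSeries.X) *
        (PowerSeries.mk fun n => polyCauchy1 k α a n / (n.factorial : ℂ)).derivativeFun =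
      PowerSeries.mk fun n =>
        (∑ j ∈ Finset.range (n + 1),
          (-1 : ℂ) ^ (n - j) * (stirling1 n j : ℂ) * (α * (j + 1) + a) ^ (-k)) /
          (n.factorial : ℂ) :=
  stmt10_general α a k
end

section
/- For every integer n ≥ 0 and every k ∈ ℤ, the two-parameter Hurwitz-Lerch type poly-Bernoulli numbers satisfy the binomial recurrence ∑_{j=0}^{n} C(n, j) · B_{j+1}^{(k)}(α,a) = ∑_{m=1}^{n+1} (-1)^{n+m-1} · m! · {n, m-1} · (αm + a)^{-k}, where C(n, j) denotes the binomial coefficient. -/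
open PowerSeries Finset

/-!
Expanding each `B_{j+1}` and exchanging the two sums, the coefficient of `(αm+a)^{-k}` becomes
`∑_j (-1)^j C(n,j) {j+1, m}`, i.e. `(-1)^n` times the `n`-th forward difference at `0` of
`j ↦ {j+1, m}`. In `j`, the recurrence of Stirling numbers reads
`Δ {j+1, m+1} = m {j+1, m+1} + {j+1, m}`, so these forward differences obey the same recurrence
in `n` as `{n, m}` and hence equal `{n, m-1}`; this is the right-hand side.
-/

open fwdDiff

lemma stirling2_eq_stirlingSecond : ∀ n m : ℕ, stirling2 n m = Nat.stirlingSecond n m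
  | 0, 0 | 0, _ + 1 | _ + 1, 0 => rfl
  | n + 1, m + 1 => by
    rw [stirling2, Nat.stirlingSecond_succ_succ, stirling2_eq_stirlingSecond n m,
      stirling2_eq_stirlingSecond n (m + 1), add_comm]

section StirlingSecond

variable {R : Type*} [CommRing R]

lemma fwdDiff_stirlingSecond_succ_left (m : ℕ) :
    Δ_[1] (fun j : ℕ ↦ (Nat.stirlingSecond (j + 1) (m + 1) : R)) =
      m • (fun j : ℕ ↦ (Nat.stirlingSecond (j + 1) (m + 1) : R)) +
        fun j : ℕ ↦ (Nat.stirlingSecond (j + 1) m : R) := by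
  ext j
  simp only [fwdDiff, Pi.add_apply, Pi.smul_apply]
  rw [Nat.stirlingSecond_succ_succ (j + 1) m, nsmul_eq_mul]
  push_cast
  ring

lemma fwdDiff_iter_stirlingSecond_succ_left (n m : ℕ) :
    (Δ_[1])^[n] (fun j : ℕ ↦ (Nat.stirlingSecond (j + 1) (m + 1) : R)) 0 =
      Nat.stirlingSecond n m := by
  induction n generalizing m with
  | zero => cases m <;> simp [Nat.stirlingSecond_succ_succ]
  | succ n ih =>
    rw [Function.iterate_succ_apply, fwdDiff_stirlingSecond_succ_left, fwdDiff_iter_add,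
      fwdDiff_iter_const_smul, Pi.add_apply, Pi.smul_apply, ih]
    cases m with
    | zero => simpa using congrFun (Function.iterate_fixed (fwdDiff_const 1 (0 : R)) n) 0
    | succ m => rw [ih, Nat.stirlingSecond_succ_succ]; push_cast; ring

lemma sum_neg_one_pow_mul_choose_mul_stirlingSecond_succ (n m : ℕ) :
    ∑ j ∈ range (n + 1), (-1 : R) ^ j * n.choose j * Nat.stirlingSecond (j + 1) (m + 1) =
      (-1) ^ n * Nat.stirlingSecond n m := by
  rw [← fwdDiff_iter_stirlingSecond_succ_left, fwdDiff_iter_eq_sum_shift, mul_sum]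
  refine sum_congr rfl fun j hj ↦ ?_
  rw [← pow_sub_mul_pow (-1 : R) (mem_range_succ_iff.mp hj)]
  have hsq : (-1 : R) ^ (n - j) * (-1) ^ (n - j) = 1 := by rw [← mul_pow]; norm_num
  rw [zero_add, smul_eq_mul, mul_one, zsmul_eq_mul]
  push_cast
  linear_combination -(-1 : R) ^ j * n.choose j * Nat.stirlingSecond (j + 1) (m + 1) * hsq

end StirlingSecond

lemma polyBernoulli_eq_sum_range_of_le (k : ℤ) (α a : ℂ) {n N : ℕ} (h : n ≤ N) :
    polyBernoulli k α a n = (-1) ^ n * ∑ m ∈ range (N + 1),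
      (-1) ^ m * (m.factorial : ℂ) * Nat.stirlingSecond n m * (α * m + a) ^ (-k) := by
  simp only [polyBernoulli, stirling2_eq_stirlingSecond]
  congr 1
  refine sum_subset (range_subset_range.mpr (by omega)) fun m _ hm ↦ ?_
  rw [Nat.stirlingSecond_eq_zero_of_lt (by simpa using hm), Nat.cast_zero, mul_zero, zero_mul]

lemma sum_Icc_one_eq_sum_range_succ {M : Type*} [AddCommMonoid M] (f : ℕ → M) (n : ℕ) :
    ∑ m ∈ Icc 1 (n + 1), f m = ∑ m ∈ range (n + 1), f (m + 1) := by
  rw [range_eq_Ico, sum_Ico_add' f 0 (n + 1) 1, zero_add, Ico_add_one_right_eq_Icc]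

theorem stmt15_general (α a : ℂ) (n : ℕ) (k : ℤ) :
    ∑ j ∈ Finset.range (n + 1), (n.choose j : ℂ) * polyBernoulli k α a (j + 1) =
      ∑ m ∈ Finset.Icc 1 (n + 1),
        (-1 : ℂ) ^ (n + m - 1) * (m.factorial : ℂ) * (stirling2 n (m - 1) : ℂ) *
          (α * m + a) ^ (-k) := by
  set c : ℕ → ℂ := fun m ↦ (-1) ^ (m + 1) * (m.factorial : ℂ) * (α * m + a) ^ (-k)
  calc ∑ j ∈ range (n + 1), (n.choose j : ℂ) * polyBernoulli k α a (j + 1)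
      = ∑ j ∈ range (n + 1), ∑ m ∈ range (n + 2),
          (-1) ^ j * (n.choose j : ℂ) * Nat.stirlingSecond (j + 1) m * c m := by
        refine sum_congr rfl fun j hj ↦ ?_
        rw [polyBernoulli_eq_sum_range_of_le k α a (by simpa using hj : j + 1 ≤ n + 1), mul_sum,
          mul_sum]
        refine sum_congr rfl fun m _ ↦ ?_
        ring
    _ = ∑ m ∈ range (n + 2), (∑ j ∈ range (n + 1),
          (-1) ^ j * (n.choose j : ℂ) * Nat.stirlingSecond (j + 1) m) * c m := by
        rw [sum_comm]
        simp only [sum_mul]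
    _ = ∑ m ∈ range (n + 1), (-1) ^ n * (Nat.stirlingSecond n m : ℂ) * c (m + 1) := by
        simp [sum_range_succ' _ (n + 1), sum_neg_one_pow_mul_choose_mul_stirlingSecond_succ]
    _ = _ := by
        rw [sum_Icc_one_eq_sum_range_succ]
        refine sum_congr rfl fun m _ ↦ ?_
        simp only [c, stirling2_eq_stirlingSecond, Nat.add_sub_cancel]
        rw [show n + (m + 1) - 1 = n + m by omega]
        ring

theorem stmt15 (α a : ℂ) (hα : α ≠ 0) (ha : ∀ m : ℕ, α * m + a ≠ 0) (n : ℕ) (k : ℤ) :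
    ∑ j ∈ Finset.range (n + 1), (n.choose j : ℂ) * polyBernoulli k α a (j + 1) =
      ∑ m ∈ Finset.Icc 1 (n + 1),
        (-1 : ℂ) ^ (n + m - 1) * (m.factorial : ℂ) * (stirling2 n (m - 1) : ℂ) *
          (α * m + a) ^ (-k) :=
  stmt15_general α a n k
end
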